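/- Set a = n − m, and let s, t be integers with t < s = a (a vertex of type 6^a). Let M be the matrix with rows (1, 0, j), (0, 1, k), (0, 0, 1), where j ∈ 𝒪/𝒫^{-t} and k ∈ 𝒪/𝒫^{s-t}. Then M represents a γ-fixed point at the vertex (s,t) if and only if v(j) ≥ −t − m and v(k) ≥ s − t − n. -/

import Mathlib

/-!
Write `g = M·x_{(s,t)}`. Conjugating `γ` by `g` gives an explicit upper triangular matrix `C₀`
with diagonal `u₁, u₂, u₃` and off-diagonal entries `(u₁ - u₃)·j·π^t` and
`(u₂ - u₃)·k·π^{t-s}`, i.e. `γ·g = g·C₀`. Since `g` is invertible, `C₀` is the only candidate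
for `C`, so `M` represents a fixed point iff `C₀ ∈ GL₃(𝒪)`. The diagonal consists of units, so
this says exactly that the two off-diagonal entries are integral, and as
`v(u₁ - u₃) = m` and `v(u₂ - u₃) = n` these are the stated bounds on `v(j)` and `v(k)`.
-/

noncomputable section

/-- The element π of F = K((π)). -/
def pp (K : Type*) [Field K] : LaurentSeries K := HahnSeries.single (1 : ℤ) (1 : K)

/-- The π-adic valuation on F = K((π)), with v(0) = ⊤. -/
def vv {K : Type*} [Field K] (x : LaurentSeries K) : WithTop ℤ := x.orderTop

/-- x ∈ 𝒫^r, i.e. v(x) ≥ r. -/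
def inP {K : Type*} [Field K] (r : ℤ) (x : LaurentSeries K) : Prop := (r : WithTop ℤ) ≤ vv x

/-- x ∈ 𝒫^r/𝒫^{r'} : x is a polynomial x_r π^r + ⋯ + x_{r'-1} π^{r'-1} (possibly 0). -/
def inPQ {K : Type*} [Field K] (r r' : ℤ) (x : LaurentSeries K) : Prop :=
  inP r x ∧ ∀ i : ℤ, r' ≤ i → x.coeff i = 0

/-- Membership in GL₃(𝒪): entries in 𝒪 and determinant a unit of 𝒪. -/
def inGLO {K : Type*} [Field K] (C : Matrix (Fin 3) (Fin 3) (LaurentSeries K)) : Prop :=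
  (∀ i j, inP 0 (C i j)) ∧ vv C.det = 0

/-- The matrix x_{(s,t)} = diag(1, π^s, π^t). -/
def xst (K : Type*) [Field K] (s t : ℤ) : Matrix (Fin 3) (Fin 3) (LaurentSeries K) :=
  Matrix.diagonal ![1, pp K ^ s, pp K ^ t]

/-- Membership in the subgroup I^a of GL₃(F). -/
def inIa {K : Type*} [Field K] (a : ℤ) (g : Matrix (Fin 3) (Fin 3) (LaurentSeries K)) : Prop :=
  g.det ≠ 0 ∧
  vv (g 0 0) = 0 ∧ vv (g 1 1) = 0 ∧ vv (g 2 2) = 0 ∧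
  inP (-a) (g 0 1) ∧ inP (-a) (g 0 2) ∧ inP 0 (g 1 2) ∧
  inP (a + 1) (g 1 0) ∧ inP (a + 1) (g 2 0) ∧ inP 1 (g 2 1)

/-- Membership in x_{(s,t)}·GL₃(𝒪)·x_{(s,t)}⁻¹. -/
def inConj {K : Type*} [Field K] (s t : ℤ) (g : Matrix (Fin 3) (Fin 3) (LaurentSeries K)) : Prop :=
  ∃ C, inGLO C ∧ g = xst K s t * C * (xst K s t)⁻¹

/-- M represents a γ-fixed point at the vertex (s,t): there is C ∈ GL₃(𝒪) with
γ·M·x_{(s,t)} = M·x_{(s,t)}·C. -/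
def reprFixed {K : Type*} [Field K] (γ M : Matrix (Fin 3) (Fin 3) (LaurentSeries K))
    (s t : ℤ) : Prop :=
  ∃ C, inGLO C ∧ γ * (M * xst K s t) = M * xst K s t * C

section

variable {K : Type*} [Field K]

lemma vv_mul (x y : LaurentSeries K) : vv (x * y) = vv x + vv y :=
  HahnSeries.orderTop_mul x y

lemma pp_ne_zero : pp K ≠ 0 :=
  HahnSeries.single_ne_zero one_ne_zero

lemma vv_pp_zpow (e : ℤ) : vv (pp K ^ e) = e := by
  rw [vv, pp, ← RatFunc.single_zpow]
  exact HahnSeries.orderTop_single one_ne_zero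

lemma ne_zero_of_vv_eq_zero {x : LaurentSeries K} (hx : vv x = 0) : x ≠ 0 := by
  rintro rfl
  simp [vv] at hx

lemma vv_sub_eq_add_vv_one_sub_div {x y : LaurentSeries K} (hy : y ≠ 0) :
    vv (x - y) = vv y + vv (1 - x / y) := by
  have h : x - y = -(y * (1 - x / y)) := by field_simp; ring
  rw [h, vv, HahnSeries.orderTop_neg]
  exact vv_mul _ _

lemma inP_zero_of_vv_eq_zero {x : LaurentSeries K} (hx : vv x = 0) : inP 0 x := by
  simp [inP, hx]

lemma zero_inP (r : ℤ) : inP r (0 : LaurentSeries K) := by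
  simp [inP, vv]

lemma inP_mul_mul_zpow_iff {c : LaurentSeries K} {d : ℤ} (hc : vv c = d) (x : LaurentSeries K)
    (r e : ℤ) : inP r (c * x * pp K ^ e) ↔ ((r - d - e : ℤ) : WithTop ℤ) ≤ vv x := by
  rw [inP, vv_mul, vv_mul, hc, vv_pp_zpow]
  induction vv x using WithTop.recTopCoe with
  | top => simp
  | coe w => norm_cast; omega

lemma inGLO_upperTriangular_iff {a b c x y : LaurentSeries K}
    (ha : vv a = 0) (hb : vv b = 0) (hc : vv c = 0) :
    inGLO !![a, 0, x; 0, b, y; 0, 0, c] ↔ inP 0 x ∧ inP 0 y := by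
  refine ⟨fun h => ⟨h.1 0 2, h.1 1 2⟩, fun ⟨hx, hy⟩ => ⟨fun i l => ?_, ?_⟩⟩
  · fin_cases i <;> fin_cases l <;>
      simp [inP_zero_of_vv_eq_zero, zero_inP, ha, hb, hc, hx, hy]
  · rw [Matrix.det_fin_three]
    simp [vv_mul, ha, hb, hc]

lemma det_unipotent_mul_xst_ne_zero (j k : LaurentSeries K) (s t : ℤ) :
    (!![1, 0, j; 0, 1, k; 0, 0, 1] * xst K s t).det ≠ 0 := by
  rw [Matrix.det_mul, Matrix.det_fin_three, xst, Matrix.det_diagonal, Fin.prod_univ_three]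
  simp [pp_ne_zero, zpow_ne_zero]

lemma reprFixed_iff_inGLO {γ M C₀ : Matrix (Fin 3) (Fin 3) (LaurentSeries K)} {s t : ℤ}
    (hdet : (M * xst K s t).det ≠ 0) (hC₀ : γ * (M * xst K s t) = M * xst K s t * C₀) :
    reprFixed γ M s t ↔ inGLO C₀ := by
  have hunit : IsUnit (M * xst K s t) :=
    (Matrix.isUnit_iff_isUnit_det _).mpr (isUnit_iff_ne_zero.mpr hdet)
  constructor
  · rintro ⟨C, hC, hγ⟩
    rwa [hunit.mul_left_cancel (hγ.symm.trans hC₀)] at hC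
  · exact fun h => ⟨C₀, h, hC₀⟩

lemma diagonal_mul_unipotent_mul_xst (u₁ u₂ u₃ j k : LaurentSeries K) (s t : ℤ) :
    Matrix.diagonal ![u₁, u₂, u₃] * (!![1, 0, j; 0, 1, k; 0, 0, 1] * xst K s t) =
      !![1, 0, j; 0, 1, k; 0, 0, 1] * xst K s t *
        !![u₁, 0, (u₁ - u₃) * j * pp K ^ t; 0, u₂, (u₂ - u₃) * k * pp K ^ (t - s); 0, 0, u₃] := by
  have hst : pp K ^ s * pp K ^ (t - s) = pp K ^ t := by
    rw [← zpow_add₀ pp_ne_zero, add_sub_cancel]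
  refine Matrix.ext fun i l => ?_
  fin_cases i <;> fin_cases l <;>
    simp [xst, Matrix.mul_apply, Fin.sum_univ_three, Matrix.diagonal_apply, Matrix.vecMul_diagonal,
      ← hst] <;>
    ring

end

theorem stmt18_general (K : Type*) [Field K]
    (u₁ u₂ u₃ : LaurentSeries K) (m n : ℤ)
    (hu₁ : vv u₁ = 0) (hu₂ : vv u₂ = 0) (hu₃ : vv u₃ = 0)
    (hv₁₃ : vv (1 - u₁ / u₃) = (m : WithTop ℤ))
    (hv₂₃ : vv (1 - u₂ / u₃) = (n : WithTop ℤ))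
    (s t : ℤ)
    (j k : LaurentSeries K) :
    reprFixed (Matrix.diagonal ![u₁, u₂, u₃]) !![1, 0, j; 0, 1, k; 0, 0, 1] s t ↔
      (((-t - m : ℤ) : WithTop ℤ) ≤ vv j ∧ ((s - t - n : ℤ) : WithTop ℤ) ≤ vv k) := by
  have hu₃0 := ne_zero_of_vv_eq_zero hu₃
  have hv₁₃' : vv (u₁ - u₃) = m := by
    rw [vv_sub_eq_add_vv_one_sub_div hu₃0, hu₃, hv₁₃, zero_add]
  have hv₂₃' : vv (u₂ - u₃) = n := by
    rw [vv_sub_eq_add_vv_one_sub_div hu₃0, hu₃, hv₂₃, zero_add]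
  rw [reprFixed_iff_inGLO (det_unipotent_mul_xst_ne_zero j k s t)
      (diagonal_mul_unipotent_mul_xst u₁ u₂ u₃ j k s t),
    inGLO_upperTriangular_iff hu₁ hu₂ hu₃, inP_mul_mul_zpow_iff hv₁₃',
    inP_mul_mul_zpow_iff hv₂₃', show 0 - m - t = -t - m by ring,
    show 0 - n - (t - s) = s - t - n by ring]

theorem stmt18 (K : Type*) [Field K]
    (u₁ u₂ u₃ : LaurentSeries K) (m n : ℤ)
    (hu₁ : vv u₁ = 0) (hu₂ : vv u₂ = 0) (hu₃ : vv u₃ = 0)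
    (h₁₂ : u₁ ≠ u₂) (h₁₃ : u₁ ≠ u₃) (h₂₃ : u₂ ≠ u₃)
    (hm : 0 ≤ m) (hmn : m ≤ n)
    (hv₁₂ : vv (1 - u₁ / u₂) = (m : WithTop ℤ))
    (hv₁₃ : vv (1 - u₁ / u₃) = (m : WithTop ℤ))
    (hv₂₃ : vv (1 - u₂ / u₃) = (n : WithTop ℤ))
    (a s t : ℤ) (ha : a = n - m) (hts : t < s) (hsa : s = a)
    (j k : LaurentSeries K) (hj : inPQ 0 (-t) j) (hk : inPQ 0 (s - t) k) :
    reprFixed (Matrix.diagonal ![u₁, u₂, u₃]) !![1, 0, j; 0, 1, k; 0, 0, 1] s t ↔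
      (((-t - m : ℤ) : WithTop ℤ) ≤ vv j ∧ ((s - t - n : ℤ) : WithTop ℤ) ≤ vv k) :=
  stmt18_general K u₁ u₂ u₃ m n hu₁ hu₂ hu₃ hv₁₃ hv₂₃ s t j k
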